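/- In any LEI-model, the formula (Iφ ∧ Iψ) → I(φ ∨ ψ) is true at every world. -/

import Mathlib

/-- Three truth values of strong Kleene logic: `f` (0), `n` (∅), `t` (1). -/
inductive TV where
  | f : TV
  | n : TV
  | t : TV
deriving DecidableEq

/-- Kleene negation: swaps 1 and 0, fixes ∅. -/
def TV.neg : TV → TV
  | .t => .f
  | .n => .n
  | .f => .t

/-- Kleene conjunction: minimum under 0 < ∅ < 1. -/
def TV.and : TV → TV → TV
  | .t, b => b
  | .n, .t => .n
  | .n, b => b
  | .f, _ => .f

/-- Kleene disjunction: maximum under 0 < ∅ < 1. -/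
def TV.or : TV → TV → TV
  | .f, b => b
  | .n, .f => .n
  | .n, b => b
  | .t, _ => .t

/-- Two-valued implication: value 1 unless the antecedent is 1 and the consequent is not. -/
def TV.imp : TV → TV → TV
  | .t, .t => .t
  | .t, _ => .f
  | _, _ => .t

/-- Modal formulas of LEI: atoms, ¬, ∧, ∨, → and the ignorance operator I. -/
inductive MForm where
  | atom : ℕ → MForm
  | neg : MForm → MForm
  | conj : MForm → MForm → MForm
  | disj : MForm → MForm → MForm
  | impl : MForm → MForm → MForm
  | ig : MForm → MForm

/-- A LEI-model: a Kripke frame with a three-valued atomic valuation. -/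
structure LEIModel (W : Type) where
  R : W → W → Prop
  V : ℕ → W → TV

open Classical in
/-- Three-valued evaluation in a LEI-model: strong Kleene clauses for ¬, ∧, ∨,
two-valued implication, and `I φ` is `t` at `w` iff `φ` is `t` at `w` and `φ` is not `t`
at any accessible world distinct from `w`; otherwise `I φ` is `f`. -/
noncomputable def val {W : Type} (M : LEIModel W) : MForm → W → TV
  | .atom k, w => M.V k w
  | .neg φ, w => (val M φ w).neg
  | .conj φ ψ, w => (val M φ w).and (val M ψ w)
  | .disj φ ψ, w => (val M φ w).or (val M ψ w)
  | .impl φ ψ, w => (val M φ w).imp (val M ψ w)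
  | .ig φ, w =>
      if val M φ w = TV.t ∧ ∀ w', w' ≠ w → M.R w w' → val M φ w' ≠ TV.t then TV.t
      else TV.f

namespace TV

theorem or_eq_t_iff {a b : TV} : a.or b = t ↔ a = t ∨ b = t := by
  cases a <;> cases b <;> simp [TV.or]

theorem and_eq_t_iff {a b : TV} : a.and b = t ↔ a = t ∧ b = t := by
  cases a <;> cases b <;> simp [TV.and]

theorem imp_eq_t_iff {a b : TV} : a.imp b = t ↔ (a = t → b = t) := by
  cases a <;> cases b <;> simp [TV.imp]

end TV

section

variable {W : Type} (M : LEIModel W)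

theorem val_disj_eq_t_iff {φ ψ : MForm} {w : W} :
    val M (.disj φ ψ) w = .t ↔ val M φ w = .t ∨ val M ψ w = .t :=
  TV.or_eq_t_iff

theorem val_ig_eq_t_iff {φ : MForm} {w : W} :
    val M (.ig φ) w = .t ↔
      val M φ w = .t ∧ ∀ w', w' ≠ w → M.R w w' → val M φ w' ≠ .t := by
  rw [val]
  split_ifs with h <;> simpa using h

theorem val_ig_disj_of_ig {φ ψ : MForm} {w : W} (hφ : val M (.ig φ) w = .t)
    (hψ : val M (.ig ψ) w = .t) : val M (.ig (.disj φ ψ)) w = .t := by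
  obtain ⟨hφw, hφ_other⟩ := (val_ig_eq_t_iff M).mp hφ
  obtain ⟨-, hψ_other⟩ := (val_ig_eq_t_iff M).mp hψ
  refine (val_ig_eq_t_iff M).mpr ⟨(val_disj_eq_t_iff M).mpr (.inl hφw), ?_⟩
  intro w' hne hR hdisj
  rcases (val_disj_eq_t_iff M).mp hdisj with h | h
  · exact hφ_other w' hne hR h
  · exact hψ_other w' hne hR h

end

/-- In any LEI-model, (Iφ ∧ Iψ) → I(φ ∨ ψ) is true at every world. -/
theorem stmt5 {W : Type} (M : LEIModel W) (φ ψ : MForm) (w : W) :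
    val M (.impl (.conj (.ig φ) (.ig ψ)) (.ig (.disj φ ψ))) w = TV.t := by
  rw [val, TV.imp_eq_t_iff, val, TV.and_eq_t_iff]
  exact fun ⟨hφ, hψ⟩ => val_ig_disj_of_ig M hφ hψ
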